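/- Let σ be the random bijection of ℕ driving the infinite q-shuffle. Fix k ≥ 1, subsets I, J ⊆ {1, ..., k} with |I| = |J| = r, and a bijection π : J → I, and set inv(π) = #{(j_1, j_2) : j_1, j_2 ∈ J, j_1 < j_2, π(j_1) > π(j_2)}. Then the probability that, for every j ∈ {1, ..., k}, one has σ(j) ≤ k if and only if j ∈ J, and σ(j) = π(j) for every j ∈ J, equals (1 − q)^r · q^{k² − 2kr − r + inv(π) + Σ_{i∈I} i + Σ_{j∈J} j}. -/

import Mathlib

/-!
Write `σ = shuffleSeq ξ`. If the positions before `j` already behave as required, then the values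
of `σ` below `k` used so far are exactly `π j'` for the earlier `j' ∈ J`. Hence for `j ∈ J` the
value `π j` is still free and is the `(π j - #{earlier j' ∈ J with π j' < π j})`-th free value,
so `σ(j) = π j` pins `ξ_j` to that number; for `j ∉ J` there are `k - #{earlier j' ∈ J}` free
values below `k`, all of which `ξ_j` must skip. So the event is `⋂ j < k, {ξ_j ∈ A_j}` with a
point or a tail `A_j`, and independence makes its probability a product of geometric point masses
and tails. Counting pairs of `J` in the exponent, each pair is either an inversion of `π` or is
subtracted in some `ξ_j`, which produces `inv(π)`.
-/

open MeasureTheory ProbabilityTheory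

/-- The first `j` values `σ(0), …, σ(j-1)` of the infinite `q`-shuffle permutation driven by
the (0-indexed) geometric choices `x`. -/
noncomputable def shufflePrefix (x : ℕ → ℕ) : ℕ → List ℕ
  | 0 => []
  | j + 1 => shufflePrefix x j ++ [Nat.nth (fun m => m ∉ shufflePrefix x j) (x j)]

/-- The random injection `σ : ℕ → ℕ` driving the infinite `q`-shuffle: `σ(j)` is the
`x j`-th smallest (0-indexed) natural number not in `{σ(0), …, σ(j-1)}`. -/
noncomputable def shuffleSeq (x : ℕ → ℕ) (j : ℕ) : ℕ :=
  Nat.nth (fun m => m ∉ shufflePrefix x j) (x j)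

open Finset

section Shuffle

variable (x : ℕ → ℕ)

lemma mem_shufflePrefix_iff {n m : ℕ} :
    m ∈ shufflePrefix x n ↔ ∃ i < n, shuffleSeq x i = m := by
  induction n with
  | zero => simp [shufflePrefix]
  | succ n ih =>
    simp only [shufflePrefix, List.mem_append, List.mem_singleton, ih, Nat.lt_succ_iff_lt_or_eq,
      or_and_right, exists_or, exists_eq_left]
    rw [eq_comm, shuffleSeq]

lemma infinite_notMem_shufflePrefix (n : ℕ) : (Set.ofPred (· ∉ shufflePrefix x n)).Infinite :=
  (shufflePrefix x n).finite_toSet.infinite_compl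

lemma shuffleSeq_lt_iff (n v : ℕ) :
    shuffleSeq x n < v ↔ x n < Nat.count (· ∉ shufflePrefix x n) v :=
  (Nat.lt_nth_iff_count_lt (infinite_notMem_shufflePrefix x n)).symm

lemma shuffleSeq_eq_iff {n v : ℕ} (hv : v ∉ shufflePrefix x n) :
    shuffleSeq x n = v ↔ x n = Nat.count (· ∉ shufflePrefix x n) v := by
  constructor
  · rintro rfl
    exact (Nat.count_nth_of_infinite (infinite_notMem_shufflePrefix x n) _).symm
  · intro h
    rw [shuffleSeq, h]
    exact Nat.nth_count hv

end Shuffle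

lemma Nat.count_notMem_list (l : List ℕ) (v : ℕ) :
    Nat.count (· ∉ l) v = v - #{m ∈ range v | m ∈ l} := by
  have := card_filter_add_card_filter_not (s := range v) (· ∈ l)
  rw [Nat.count_eq_card_filter_range, card_range] at *
  omega

section Pattern

variable {k : ℕ} (J : Finset (Fin k)) (π : Fin k → Fin k)

def MatchesAt (σ : ℕ → ℕ) (j : Fin k) : Prop :=
  (σ j < k ↔ j ∈ J) ∧ (j ∈ J → σ j = π j)

def earlierBelow (j : Fin k) (v : ℕ) : ℕ := #{j' ∈ J | j' < j ∧ (π j' : ℕ) < v}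

def allowedChoices (j : Fin k) : Set ℕ :=
  if j ∈ J then {(π j : ℕ) - earlierBelow J π j (π j)} else Set.Ici (k - earlierBelow J π j k)

variable {J π} {x : ℕ → ℕ} {j : Fin k}

lemma mem_shufflePrefix_iff_of_matchesAt (h : ∀ j' < j, MatchesAt J π (shuffleSeq x) j')
    {m : ℕ} (hm : m < k) :
    m ∈ shufflePrefix x j ↔ ∃ j' ∈ J, j' < j ∧ (π j' : ℕ) = m := by
  rw [mem_shufflePrefix_iff]
  constructor
  · rintro ⟨i, hi, rfl⟩
    have hj' : (⟨i, hi.trans j.isLt⟩ : Fin k) < j := hi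
    have hJ := (h _ hj').1.1 hm
    exact ⟨_, hJ, hj', ((h _ hj').2 hJ).symm⟩
  · rintro ⟨j', hJ, hj', rfl⟩
    exact ⟨j', hj', (h j' hj').2 hJ⟩

lemma count_notMem_shufflePrefix_of_matchesAt (hinj : Set.InjOn π J)
    (h : ∀ j' < j, MatchesAt J π (shuffleSeq x) j') {v : ℕ} (hv : v ≤ k) :
    Nat.count (· ∉ shufflePrefix x j) v = v - earlierBelow J π j v := by
  rw [Nat.count_notMem_list, earlierBelow]
  congr 1
  have himage : {m ∈ range v | m ∈ shufflePrefix x j} =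
      image (fun j' => (π j' : ℕ)) {j' ∈ J | j' < j ∧ (π j' : ℕ) < v} := by
    ext m
    simp only [mem_filter, mem_range, mem_image]
    constructor
    · rintro ⟨hmv, hm⟩
      obtain ⟨j', hJ, hj', rfl⟩ :=
        (mem_shufflePrefix_iff_of_matchesAt h (hmv.trans_le hv)).1 hm
      exact ⟨j', ⟨hJ, hj', hmv⟩, rfl⟩
    · rintro ⟨j', ⟨hJ, hj', hmv⟩, rfl⟩
      exact ⟨hmv, (mem_shufflePrefix_iff_of_matchesAt h (π j').isLt).2 ⟨j', hJ, hj', rfl⟩⟩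
  rw [himage, card_image_of_injOn]
  exact fun a ha b hb hab => hinj (mem_filter.1 ha).1 (mem_filter.1 hb).1 (Fin.val_injective hab)

lemma matchesAt_iff_mem_allowedChoices (hinj : Set.InjOn π J)
    (h : ∀ j' < j, MatchesAt J π (shuffleSeq x) j') :
    MatchesAt J π (shuffleSeq x) j ↔ x j ∈ allowedChoices J π j := by
  by_cases hj : j ∈ J
  · have hfree : (π j : ℕ) ∉ shufflePrefix x j := by
      rw [mem_shufflePrefix_iff_of_matchesAt h (π j).isLt]
      rintro ⟨j', hJ, hj', hπ⟩
      exact hj'.ne (hinj hJ hj (Fin.val_injective hπ))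
    simp only [MatchesAt, allowedChoices, hj, iff_true, forall_const, if_true,
      Set.mem_singleton_iff]
    rw [← count_notMem_shufflePrefix_of_matchesAt hinj h (π j).isLt.le,
      ← shuffleSeq_eq_iff x hfree]
    exact ⟨And.right, fun hσ => ⟨hσ ▸ (π j).isLt, hσ⟩⟩
  · simp only [MatchesAt, allowedChoices, hj, iff_false, false_imp_iff, and_true, if_false,
      Set.mem_Ici, shuffleSeq_lt_iff, count_notMem_shufflePrefix_of_matchesAt hinj h le_rfl]
    omega

lemma forall_matchesAt_shuffleSeq_iff (hinj : Set.InjOn π J) :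
    (∀ j, MatchesAt J π (shuffleSeq x) j) ↔ ∀ j, x j ∈ allowedChoices J π j :=
  ⟨fun h j => (matchesAt_iff_mem_allowedChoices hinj fun j' _ => h j').1 (h j),
    fun h j => WellFoundedLT.induction j fun j ih =>
      (matchesAt_iff_mem_allowedChoices hinj ih).2 (h j)⟩

end Pattern

lemma Fin.sum_card_filter_lt {k : ℕ} (J : Finset (Fin k)) :
    ∑ j : Fin k, #{j' ∈ J | j' < j} = ∑ j' ∈ J, (k - 1 - j') := by
  simp only [card_filter]
  rw [sum_comm]
  refine sum_congr rfl fun j' _ => ?_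
  rw [← card_filter, ← Fin.card_Ioi]
  congr 1
  ext j
  simp

/-- Each pair `a < b` of `s` is either an inversion of `f` or counted on the right. -/
lemma card_inversions_add_sum_card {α β : Type*} [LinearOrder α] [LinearOrder β]
    (s : Finset α) {f : α → β} (hf : Set.InjOn f s) :
    #{p ∈ s ×ˢ s | p.1 < p.2 ∧ f p.2 < f p.1} + ∑ b ∈ s, #{a ∈ s | a < b ∧ f a < f b} =
      ∑ b ∈ s, #{a ∈ s | a < b} := by
  rw [card_filter, sum_product_right, ← sum_add_distrib]
  refine sum_congr rfl fun b hb => ?_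
  rw [← card_filter, ← card_union_of_disjoint]
  · congr 1
    ext a
    simp only [mem_union, mem_filter]
    constructor
    · rintro (⟨ha, hab, -⟩ | ⟨ha, hab, -⟩) <;> exact ⟨ha, hab⟩
    · rintro ⟨ha, hab⟩
      rcases lt_or_gt_of_ne (hf.ne ha hb hab.ne) with h | h
      · exact Or.inr ⟨ha, hab, h⟩
      · exact Or.inl ⟨ha, hab, h⟩
  · exact disjoint_filter.2 fun a _ h h' => lt_asymm h.2 h'.2

section Exponent

variable {k : ℕ} {J : Finset (Fin k)} {π : Fin k → Fin k}

lemma earlierBelow_le (hinj : Set.InjOn π J) (j : Fin k) (v : ℕ) :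
    earlierBelow J π j v ≤ v := by
  calc earlierBelow J π j v ≤ #(range v) :=
        card_le_card_of_injOn (fun j' => (π j' : ℕ))
          (fun j' hj' => by simpa using (mem_filter.1 hj').2.2)
          fun a ha b hb hab => hinj (mem_filter.1 ha).1 (mem_filter.1 hb).1 (Fin.val_injective hab)
    _ = v := card_range v

lemma earlierBelow_self (j : Fin k) :
    earlierBelow J π j (π j) = #{j' ∈ J | j' < j ∧ π j' < π j} := rfl

lemma earlierBelow_eq_card_lt (j : Fin k) : earlierBelow J π j k = #{j' ∈ J | j' < j} := by
  simp [earlierBelow]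

lemma mallows_exponent_eq {r : ℕ} (I : Finset (Fin k)) (hJ : #J = r) (hinj : Set.InjOn π J)
    (himg : J.image π = I) :
    (k : ℤ) ^ 2 - 2 * (k : ℤ) * (r : ℤ) - (r : ℤ) +
        (#{p ∈ J ×ˢ J | p.1 < p.2 ∧ π p.2 < π p.1} : ℤ) +
        (∑ i ∈ I, ((i : ℤ) + 1)) + (∑ j ∈ J, ((j : ℤ) + 1)) =
      ((∑ j ∈ J, ((π j : ℕ) - earlierBelow J π j (π j)) +
        ∑ j ∈ Jᶜ, (k - earlierBelow J π j k) : ℕ) : ℤ) := by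
  subst himg hJ
  have hinv := congrArg (Nat.cast : ℕ → ℤ) (card_inversions_add_sum_card J hinj)
  have hall := congrArg (Nat.cast : ℕ → ℤ) (Fin.sum_card_filter_lt J)
  have hsub : ∀ j : Fin k, ((k - 1 - j : ℕ) : ℤ) = k - 1 - j := fun j => by omega
  rw [← sum_add_sum_compl J] at hall
  push_cast [hsub, sum_image hinj, Nat.cast_sub (earlierBelow_le hinj _ _)] at hinv hall ⊢
  simp only [earlierBelow_self, earlierBelow_eq_card_lt, sum_add_distrib, sum_sub_distrib,
    sum_const, card_compl, Fintype.card_fin, nsmul_eq_mul] at hinv hall ⊢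
  rw [Nat.cast_sub (by simpa using card_le_univ J)]
  linear_combination hinv + hall

end Exponent

lemma measure_le_of_geometric {q : ℝ} (hq0 : 0 < q) (hq1 : q < 1)
    {Ω : Type*} [MeasurableSpace Ω] {P : Measure Ω} [IsProbabilityMeasure P]
    {f : Ω → ℕ} (hf : Measurable f)
    (hgeom : ∀ i : ℕ, P {ω | f ω = i} = ENNReal.ofReal ((1 - q) * q ^ i)) (m : ℕ) :
    P {ω | m ≤ f ω} = ENNReal.ofReal (q ^ m) := by
  induction m with
  | zero => simp
  | succ m ih =>
    have hsplit : {ω | m ≤ f ω} = {ω | f ω = m} ∪ {ω | m + 1 ≤ f ω} := by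
      ext ω
      simp only [Set.mem_ofPred_eq, Set.mem_union]
      omega
    have hdisj : Disjoint {ω | f ω = m} {ω | m + 1 ≤ f ω} :=
      Set.disjoint_left.2 fun ω h1 h2 => by simp_all
    have hunion := measure_union (μ := P) hdisj (hf measurableSet_Ici)
    have hq : ENNReal.ofReal (q ^ m) =
        ENNReal.ofReal ((1 - q) * q ^ m) + ENNReal.ofReal (q ^ (m + 1)) := by
      rw [← ENNReal.ofReal_add (by bound) (by positivity)]
      ring_nf
    rw [← hsplit, ih, hgeom, hq] at hunion
    exact ((ENNReal.add_right_inj ENNReal.ofReal_ne_top).1 hunion).symm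

lemma Finset.prod_ite_mem_mul_pow {ι M : Type*} [Fintype ι] [DecidableEq ι] [CommMonoid M]
    (J : Finset ι) (a q : M) (f g : ι → ℕ) :
    ∏ j, (if j ∈ J then a * q ^ f j else q ^ g j) =
      a ^ #J * q ^ (∑ j ∈ J, f j + ∑ j ∈ Jᶜ, g j) := by
  rw [prod_ite, filter_mem_eq_inter, univ_inter, filter_notMem_eq_sdiff, ← compl_eq_univ_sdiff,
    prod_mul_distrib, prod_const, prod_pow_eq_pow_sum, prod_pow_eq_pow_sum, pow_add, mul_assoc]

theorem stmt_17_general (q : ℝ) (hq0 : 0 < q) (hq1 : q < 1)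
    (Ω : Type*) [MeasurableSpace Ω] (P : Measure Ω) [IsProbabilityMeasure P]
    (ξ : ℕ → Ω → ℕ) (hmeas : ∀ j, Measurable (ξ j))
    (hindep : iIndepFun ξ P)
    (hgeom : ∀ j i : ℕ, P {ω | ξ j ω = i} = ENNReal.ofReal ((1 - q) * q ^ i))
    (k : ℕ) (r : ℕ) (I J : Finset (Fin k)) (hJ : J.card = r)
    (π : Fin k → Fin k) (hinj : Set.InjOn π ↑J)
    (himg : J.image π = I) :
    P {ω | ∀ j : Fin k,
        (shuffleSeq (fun t => ξ t ω) (j : ℕ) < k ↔ j ∈ J) ∧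
        (j ∈ J → shuffleSeq (fun t => ξ t ω) (j : ℕ) = (π j : ℕ))} =
      ENNReal.ofReal ((1 - q) ^ r *
        q ^ ((k : ℤ) ^ 2 - 2 * (k : ℤ) * (r : ℤ) - (r : ℤ) +
          (((J ×ˢ J).filter (fun p : Fin k × Fin k => p.1 < p.2 ∧ π p.2 < π p.1)).card : ℤ) +
          (∑ i ∈ I, ((i : ℤ) + 1)) + (∑ j ∈ J, ((j : ℤ) + 1)))) := by
  have hevent : {ω | ∀ j : Fin k,
        (shuffleSeq (fun t => ξ t ω) (j : ℕ) < k ↔ j ∈ J) ∧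
        (j ∈ J → shuffleSeq (fun t => ξ t ω) (j : ℕ) = (π j : ℕ))} =
      ⋂ j ∈ (univ : Finset (Fin k)), ξ j ⁻¹' allowedChoices J π j := by
    ext ω
    simp only [Set.mem_ofPred_eq, Set.mem_iInter, mem_univ, Set.mem_preimage, forall_const]
    exact forall_matchesAt_shuffleSeq_iff hinj
  have hfactor (j : Fin k) : P (ξ j ⁻¹' allowedChoices J π j) = ENNReal.ofReal
      (if j ∈ J then (1 - q) * q ^ ((π j : ℕ) - earlierBelow J π j (π j))
        else q ^ (k - earlierBelow J π j k)) := by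
    by_cases hj : j ∈ J
    · simp only [allowedChoices, hj, if_true]
      exact hgeom j _
    · simp only [allowedChoices, hj, if_false]
      exact measure_le_of_geometric hq0 hq1 (hmeas j) (hgeom j) _
  rw [hevent, (hindep.precomp Fin.val_injective).measure_inter_preimage_eq_mul _
      fun _ _ => .of_discrete, prod_congr rfl fun j _ => hfactor j,
    ← ENNReal.ofReal_prod_of_nonneg fun j _ => by split_ifs <;> bound,
    prod_ite_mem_mul_pow, mallows_exponent_eq I hJ hinj himg, zpow_natCast, hJ]

/-- finite-dimensional distributions of the Mallows measure on bijections of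
`ℕ`.  With positions and values written `0`-based (so `j : Fin k` stands for `j+1`, and
"`σ(j) ≤ k`" becomes "`σ(j) < k`"), for `I, J ⊆ {0, …, k-1}` with `|I| = |J| = r` and a
bijection `π` from `J` onto `I`, the probability that `σ(j) < k` iff `j ∈ J` and
`σ(j) = π(j)` for `j ∈ J` equals
`(1-q)^r q^{k² - 2kr - r + inv(π) + Σ_{i∈I}(i+1) + Σ_{j∈J}(j+1)}` (the sums use `1`-based
values).  Here `ξ_0, ξ_1, …` are independent, geometric: `P(ξ = i) = (1-q) q^i`. -/
theorem stmt_17 (q : ℝ) (hq0 : 0 < q) (hq1 : q < 1)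
    (Ω : Type*) [MeasurableSpace Ω] (P : Measure Ω) [IsProbabilityMeasure P]
    (ξ : ℕ → Ω → ℕ) (hmeas : ∀ j, Measurable (ξ j))
    (hindep : iIndepFun ξ P)
    (hgeom : ∀ j i : ℕ, P {ω | ξ j ω = i} = ENNReal.ofReal ((1 - q) * q ^ i))
    (k : ℕ) (hk : 1 ≤ k) (r : ℕ) (I J : Finset (Fin k)) (hI : I.card = r) (hJ : J.card = r)
    (π : Fin k → Fin k) (hmaps : ∀ j ∈ J, π j ∈ I) (hinj : Set.InjOn π ↑J)
    (himg : J.image π = I) :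
    P {ω | ∀ j : Fin k,
        (shuffleSeq (fun t => ξ t ω) (j : ℕ) < k ↔ j ∈ J) ∧
        (j ∈ J → shuffleSeq (fun t => ξ t ω) (j : ℕ) = (π j : ℕ))} =
      ENNReal.ofReal ((1 - q) ^ r *
        q ^ ((k : ℤ) ^ 2 - 2 * (k : ℤ) * (r : ℤ) - (r : ℤ) +
          (((J ×ˢ J).filter (fun p : Fin k × Fin k => p.1 < p.2 ∧ π p.2 < π p.1)).card : ℤ) +
          (∑ i ∈ I, ((i : ℤ) + 1)) + (∑ j ∈ J, ((j : ℤ) + 1)))) :=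
  stmt_17_general q hq0 hq1 Ω P ξ hmeas hindep hgeom k r I J hJ π hinj himg
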